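/- arXiv:2311.16347 — 5 statements merged into one kernel-verified Lean document; each statement's English description precedes it below -/
import Mathlib

section
/- For every permutation σ of {1,…,n} there exists exactly one word in L_n whose product is σ; equivalently, the map from L_n to the symmetric group S_n sending a word to the product of its entries is a bijection. -/
private lemma fixlt {n m : ℕ} (τ : Equiv.Perm (Fin n))
    (h : ∀ x : Fin n, m ≤ x.val → τ x = x) (x : Fin n) (hx : x.val < m) :
    (τ x).val < m := by
  by_contra h'
  push_neg at h'
  have h2 : τ (τ x) = τ x := h _ h'
  have h3 : τ x = x := τ.injective h2
  rw [h3] at h'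
  omega

private lemma prodfix {n m : ℕ} (w : List (Fin n × Fin n))
    (h1 : ∀ p ∈ w, p.1 < p.2)
    (h2 : ∀ p ∈ w, (p.2 : ℕ) < m) :
    ∀ x : Fin n, m ≤ x.val → (w.map fun p => Equiv.swap p.1 p.2).prod x = x := by
  induction w with
  | nil => intro x _; simp
  | cons p w ih =>
    intro x hx
    simp only [List.map_cons, List.prod_cons, Equiv.Perm.mul_apply]
    rw [ih (fun q hq => h1 q (List.mem_cons_of_mem _ hq))
        (fun q hq => h2 q (List.mem_cons_of_mem _ hq)) x hx,
      Equiv.swap_apply_of_ne_of_ne]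
    · intro he
      have ha := h2 p (List.mem_cons_self)
      have hb := h1 p (List.mem_cons_self)
      rw [Fin.lt_def] at hb
      rw [he] at hx
      omega
    · intro he
      have := h2 p (List.mem_cons_self)
      rw [he] at hx
      omega

private lemma key (n : ℕ) : ∀ (m : ℕ) (σ : Equiv.Perm (Fin n)),
    (∀ x : Fin n, m ≤ x.val → σ x = x) →
    ∃ w : List (Fin n × Fin n),
      ((∀ p ∈ w, p.1 < p.2) ∧ List.Chain' (· < ·) (w.map Prod.snd) ∧
        ∀ p ∈ w, (p.2 : ℕ) < m) ∧
      (w.map fun p => Equiv.swap p.1 p.2).prod = σ ∧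
      ∀ w' : List (Fin n × Fin n),
        ((∀ p ∈ w', p.1 < p.2) ∧ List.Chain' (· < ·) (w'.map Prod.snd) ∧
          ∀ p ∈ w', (p.2 : ℕ) < m) →
        (w'.map fun p => Equiv.swap p.1 p.2).prod = σ → w' = w := by
  intro m
  induction m with
  | zero =>
    intro σ h
    have hσ : σ = 1 := by
      ext x
      exact congrArg Fin.val (h x (Nat.zero_le _))
    refine ⟨[], ⟨by simp, List.isChain_nil, by simp⟩, by simp [hσ], ?_⟩
    rintro (_ | ⟨p, w'⟩) ⟨_, _, h3⟩ _
    · rfl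
    · exact absurd (h3 p (List.mem_cons_self)) (by omega)
  | succ m ih =>
    intro σ h
    by_cases hm : m < n
    · set j : Fin n := ⟨m, hm⟩ with hj
      have hjm : (j : ℕ) = m := rfl
      by_cases hσ : σ j = j
      · -- σ fixes j as well, reduce to m
        have hfix : ∀ x : Fin n, m ≤ x.val → σ x = x := by
          intro x hx
          rcases eq_or_lt_of_le hx with he | hl
          · have : x = j := Fin.ext he.symm
            rw [this]; exact hσ
          · exact h x hl
        obtain ⟨w, ⟨hw1, hw2, hw3⟩, hwp, huniq⟩ := ih σ hfix
        refine ⟨w, ⟨hw1, hw2, fun p hp => (hw3 p hp).trans (Nat.lt_succ_self m)⟩, hwp, ?_⟩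
        rintro w' ⟨h1', h2', h3'⟩ hp'
        refine huniq w' ⟨h1', h2', ?_⟩ hp'
        rcases w'.eq_nil_or_concat with rfl | ⟨ws, p, rfl⟩
        · simp
        · simp only [List.concat_eq_append] at h1' h2' h3' hp' ⊢
          have hlast : ∀ q ∈ ws, q.2 < p.2 := by
            have hpw : List.Pairwise (· < ·) ((ws ++ [p]).map Prod.snd) :=
              List.isChain_iff_pairwise.mp h2'
            rw [List.map_append, List.pairwise_append] at hpw
            intro q hq
            exact hpw.2.2 q.2 (List.mem_map_of_mem hq) p.2 (by simp)
          have hp2 : (p.2 : ℕ) < m := by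
            by_contra hc
            push_neg at hc
            have hpm : (p.2 : ℕ) = m := by
              have := h3' p (List.mem_append_right _ (by simp)); omega
            have hpj : p.2 = j := Fin.ext hpm
            have hws1 : ∀ q ∈ ws, q.1 < q.2 := fun q hq =>
              h1' q (List.mem_append_left _ hq)
            have hws3 : ∀ q ∈ ws, (q.2 : ℕ) < m := by
              intro q hq
              have := hlast q hq
              rw [Fin.lt_def] at this
              omega
            have hfixws := prodfix ws hws1 hws3
            have hcomp : σ j = (ws.map fun p => Equiv.swap p.1 p.2).prod p.1 := by
              rw [← hp']
              simp only [List.map_append, List.prod_append, List.map_cons,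
                List.map_nil, List.prod_cons, List.prod_nil, mul_one,
                Equiv.Perm.mul_apply]
              rw [← hpj, Equiv.swap_apply_right]
            have h1p : (p.1 : ℕ) < m := by
              have := h1' p (List.mem_append_right _ (by simp))
              rw [Fin.lt_def] at this
              omega
            have hlt := fixlt _ hfixws p.1 h1p
            rw [← hcomp, hσ, hjm] at hlt
            omega
          intro q hq
          rcases List.mem_append.mp hq with hq | hq
          · have := hlast q hq; rw [Fin.lt_def] at this; omega
          · simp at hq; rw [hq]; exact hp2
      · -- σ moves j
        set i : Fin n := σ⁻¹ j with hi
        have hσi : σ i = j := σ.apply_symm_apply j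
        have him : (i : ℕ) < m := by
          by_contra hc
          push_neg at hc
          rcases eq_or_lt_of_le hc with he | hl
          · have : i = j := Fin.ext he.symm
            rw [this] at hσi
            exact hσ hσi
          · have hfi := h i hl
            rw [hσi] at hfi
            rw [← hfi, hjm] at hl
            omega
        have hijlt : i < j := by rw [Fin.lt_def, hjm]; exact him
        set σ' := σ * Equiv.swap i j with hσ'def
        have hσ'fix : ∀ x : Fin n, m ≤ x.val → σ' x = x := by
          intro x hx
          rcases eq_or_lt_of_le hx with he | hl
          · have hx' : x = j := Fin.ext he.symm
            rw [hx', hσ'def]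
            simp only [Equiv.Perm.mul_apply, Equiv.swap_apply_right]
            exact hσi
          · have hxi : x ≠ i := by
              intro e; rw [e] at hl; omega
            have hxj : x ≠ j := by
              intro e; rw [e, hjm] at hl; omega
            rw [hσ'def]
            simp only [Equiv.Perm.mul_apply, Equiv.swap_apply_of_ne_of_ne hxi hxj]
            exact h x hl
        obtain ⟨w, ⟨hw1, hw2, hw3⟩, hwp, huniq⟩ := ih σ' hσ'fix
        refine ⟨w ++ [(i, j)], ⟨?_, ?_, ?_⟩, ?_, ?_⟩
        · intro p hp
          rcases List.mem_append.mp hp with hp | hp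
          · exact hw1 p hp
          · simp at hp; rw [hp]; exact hijlt
        · rw [List.map_append, List.Chain', List.isChain_iff_pairwise, List.pairwise_append]
          refine ⟨List.isChain_iff_pairwise.mp hw2, by simp, ?_⟩
          intro a ha b hb
          simp only [List.map_cons, List.map_nil, List.mem_singleton] at hb
          subst hb
          obtain ⟨q, hq, rfl⟩ := List.mem_map.mp ha
          rw [Fin.lt_def, hjm]
          exact hw3 q hq
        · intro p hp
          rcases List.mem_append.mp hp with hp | hp
          · exact (hw3 p hp).trans (Nat.lt_succ_self m)
          · simp at hp; rw [hp]; exact Nat.lt_succ_of_le (le_of_eq hjm)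
        · rw [List.map_append, List.prod_append]
          simp only [List.map_cons, List.map_nil, List.prod_cons, List.prod_nil, mul_one]
          rw [hwp, hσ'def, mul_assoc, Equiv.swap_mul_self, mul_one]
        · rintro w' ⟨h1', h2', h3'⟩ hp'
          rcases w'.eq_nil_or_concat with rfl | ⟨ws, p, rfl⟩
          · exfalso
            simp only [List.map_nil, List.prod_nil] at hp'
            rw [← hp'] at hσ
            exact hσ rfl
          · simp only [List.concat_eq_append] at h1' h2' h3' hp' ⊢
            have hlast : ∀ q ∈ ws, q.2 < p.2 := by
              have hpw : List.Pairwise (· < ·) ((ws ++ [p]).map Prod.snd) :=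
                List.isChain_iff_pairwise.mp h2'
              rw [List.map_append, List.pairwise_append] at hpw
              intro q hq
              exact hpw.2.2 q.2 (List.mem_map_of_mem hq) p.2 (by simp)
            have hws1 : ∀ q ∈ ws, q.1 < q.2 := fun q hq =>
              h1' q (List.mem_append_left _ hq)
            have hpj : p.2 = j := by
              by_contra hne
              have hlt : (p.2 : ℕ) < m := by
                have h1 := h3' p (List.mem_append_right _ (by simp))
                have hne' : (p.2 : ℕ) ≠ m := fun e => hne (Fin.ext (e.trans hjm.symm))
                omega
              have hall1 : ∀ q ∈ ws ++ [p], q.1 < q.2 := h1'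
              have hall2 : ∀ q ∈ ws ++ [p], (q.2 : ℕ) < m := by
                intro q hq
                rcases List.mem_append.mp hq with hq | hq
                · have := hlast q hq; rw [Fin.lt_def] at this; omega
                · simp at hq; rw [hq]; exact hlt
              have := prodfix (ws ++ [p]) hall1 hall2 j (le_of_eq hjm.symm)
              rw [hp'] at this
              exact hσ this
            have hws3 : ∀ q ∈ ws, (q.2 : ℕ) < m := by
              intro q hq
              have := hlast q hq
              rw [hpj, Fin.lt_def, hjm] at this
              exact this
            have hfixws := prodfix ws hws1 hws3
            have hσp1 : σ p.1 = j := by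
              rw [← hp']
              simp only [List.map_append, List.prod_append, List.map_cons,
                List.map_nil, List.prod_cons, List.prod_nil, mul_one,
                Equiv.Perm.mul_apply]
              rw [hpj, Equiv.swap_apply_left]
              exact hfixws j (le_of_eq hjm.symm)
            have hpi : p.1 = i := σ.injective (hσp1.trans hσi.symm)
            have hpe : p = (i, j) := Prod.ext hpi hpj
            have hprodsplit : (ws.map fun p => Equiv.swap p.1 p.2).prod *
                Equiv.swap i j = σ := by
              rw [← hp', hpe]
              simp [List.map_append, List.prod_append]
            have hwse : (ws.map fun p => Equiv.swap p.1 p.2).prod = σ' := by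
              rw [hσ'def, ← hprodsplit, mul_assoc, Equiv.swap_mul_self, mul_one]
            have hwsc : List.Chain' (· < ·) (ws.map Prod.snd) := by
              rw [List.map_append] at h2'
              exact (List.isChain_append.mp h2').1
            rw [huniq ws ⟨hws1, hwsc, hws3⟩ hwse, hpe]
    · push_neg at hm
      have h' : ∀ x : Fin n, m ≤ x.val → σ x = x := fun x hx => h x (by omega)
      obtain ⟨w, ⟨hw1, hw2, hw3⟩, hwp, huniq⟩ := ih σ h'
      refine ⟨w, ⟨hw1, hw2, fun p hp => (hw3 p hp).trans (Nat.lt_succ_self m)⟩, hwp, ?_⟩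
      rintro w' ⟨a, b, c⟩ d
      exact huniq w' ⟨a, b, fun p hp => lt_of_lt_of_le p.2.isLt hm⟩ d

/-- For `n ≥ 2`, the map from `L_n` (words `((i₁,j₁),…,(i_t,j_t))` of
transpositions with `i_k < j_k` and `j₁ < j₂ < … < j_t`, including the empty word)
to the symmetric group `S_n`, sending a word to the product of its entries, is a bijection. -/
theorem stmt0 (n : ℕ) (hn : 2 ≤ n) :
    Function.Bijective
      (fun w : {w : List (Fin n × Fin n) //
          (∀ p ∈ w, p.1 < p.2) ∧ List.Chain' (· < ·) (w.map Prod.snd)} =>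
        (w.1.map (fun p => Equiv.swap p.1 p.2)).prod) := by
  constructor
  · intro w1 w2 hww
    obtain ⟨w, _, _, huniq⟩ := key n n ((w1.1.map fun p => Equiv.swap p.1 p.2).prod)
      (fun x hx => absurd x.isLt (by omega))
    have e1 := huniq w1.1 ⟨w1.2.1, w1.2.2, fun p _ => p.2.isLt⟩ rfl
    have e2 := huniq w2.1 ⟨w2.2.1, w2.2.2, fun p _ => p.2.isLt⟩ hww.symm
    exact Subtype.ext (e1.trans e2.symm)
  · intro σ
    obtain ⟨w, ⟨h1, h2, _⟩, hp, _⟩ := key n n σ (fun x hx => absurd x.isLt (by omega))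
    exact ⟨⟨w, h1, h2⟩, hp⟩
end

section
/- For n ≥ 2, every deterministic finite automaton over the alphabet T_n whose accepted language is exactly L_n has at least n+1 states. -/
/-- For `n ≥ 2`, every deterministic finite automaton over the alphabet
`T_n = {(i,j) : 1 ≤ i < j ≤ n}` whose accepted language is exactly `L_n`
(the words whose second components are strictly increasing) has at least `n+1` states. -/
theorem stmt3 (n : ℕ) (hn : 2 ≤ n) (S : Type*) [Fintype S]
    (M : DFA {p : Fin n × Fin n // p.1 < p.2} S)
    (hM : M.accepts =
      {w : List {p : Fin n × Fin n // p.1 < p.2} |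
        List.Chain' (· < ·) (w.map fun p => p.1.2)}) :
    n + 1 ≤ Fintype.card S := by
  classical
  have h0 : 0 < n := by omega
  have h1 : 1 < n := hn
  -- letter with first component 0 and second component k
  let ℓ : ∀ k : ℕ, 0 < k → k < n → {p : Fin n × Fin n // p.1 < p.2} :=
    fun k hk hkn => ⟨(⟨0, h0⟩, ⟨k, hkn⟩), by simpa [Fin.mk_lt_mk] using hk⟩
  let u : Fin (n+1) → List {p : Fin n × Fin n // p.1 < p.2} := fun a =>
    if ha : a.val = 0 then []
    else if hb : a.val = n then [ℓ 1 one_pos h1, ℓ 1 one_pos h1]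
    else [ℓ a.val (by omega) (by omega)]
  have hmem : ∀ w, w ∈ M.accepts ↔
      List.Chain' (· < ·) (w.map fun p => p.1.2) := by
    intro w; rw [hM]; rfl
  have main : ∀ a b : Fin (n+1), a < b → M.eval (u a) ≠ M.eval (u b) := by
    intro a b hab heq
    have hab' : a.val < b.val := hab
    have hn0 : ¬ n = 0 := by omega
    have hb0 : 0 < b.val := by omega
    have hbn : b.val ≤ n := by omega
    set v : List {p : Fin n × Fin n // p.1 < p.2} :=
      if hbn' : b.val = n then [] else [ℓ b.val hb0 (by omega)] with hv
    have hsame : M.eval (u a ++ v) = M.eval (u b ++ v) := by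
      simp only [DFA.eval, DFA.evalFrom_of_append]
      exact congrArg (fun s => M.evalFrom s v) heq
    have hiff : (u a ++ v) ∈ M.accepts ↔ (u b ++ v) ∈ M.accepts := by
      rw [DFA.mem_accepts, DFA.mem_accepts, hsame]
    rw [hmem, hmem] at hiff
    by_cases hcase : b.val = n
    · -- v = [], u b is the dead word
      have hv0 : v = [] := by simp [hv, hcase]
      have han : a.val ≠ n := by omega
      have hbne : b.val ≠ 0 := by omega
      have hubs : u b = [ℓ 1 one_pos h1, ℓ 1 one_pos h1] := by
        simp [u, hbne, hcase, hn0, (by simpa using hbne : b ≠ 0)]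
      have hnot : ¬ List.Chain' (· < ·) ((u b ++ v).map fun p => p.1.2) := by
        simp [hubs, hv0, ℓ, List.Chain', List.isChain_pair]
      have hyes : List.Chain' (· < ·) ((u a ++ v).map fun p => p.1.2) := by
        by_cases ha0 : a.val = 0
        · simp [u, ha0, hv0, List.Chain', (by simpa using ha0 : a = 0)]
        · simp [u, ha0, han, hv0, ℓ, List.Chain', (by simpa using ha0 : a ≠ 0)]
      exact hnot (hiff.mp hyes)
    · -- v = [ℓ b.val]
      have hbltn : b.val < n := by omega
      have hv1 : v = [ℓ b.val hb0 hbltn] := by simp [hv, hcase]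
      have hbne : b.val ≠ 0 := by omega
      have hubs : u b = [ℓ b.val (by omega) (by omega)] := by
        simp [u, hbne, hcase, hn0, (by simpa using hbne : b ≠ 0)]
      have hnot : ¬ List.Chain' (· < ·) ((u b ++ v).map fun p => p.1.2) := by
        simp [hubs, hv1, ℓ, List.Chain', List.isChain_pair]
      have hyes : List.Chain' (· < ·) ((u a ++ v).map fun p => p.1.2) := by
        have han : a.val ≠ n := by omega
        by_cases ha0 : a.val = 0
        · simp [u, ha0, hv1, List.Chain', (by simpa using ha0 : a = 0)]
        · simp [u, ha0, han, hv1, ℓ, List.Chain', List.isChain_pair, Fin.mk_lt_mk, (by simpa using ha0 : a ≠ 0)]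
          exact hab'
      exact hnot (hiff.mp hyes)
  have inj : Function.Injective (fun a : Fin (n+1) => M.eval (u a)) := by
    intro a b h
    by_contra hne
    rcases lt_or_gt_of_ne hne with h' | h'
    · exact main a b h' h
    · exact main b a h' h.symm
  calc n + 1 = Fintype.card (Fin (n+1)) := by simp
    _ ≤ Fintype.card S := Fintype.card_le_of_injective _ inj
end

section
/- If w ∈ L_n and v is any word over T_n with v ≠ w such that v defines the same permutation as w, then w <_w v; that is, every word of L_n is the strictly least element of its equivalence class of words defining the same permutation, under the length-then-lexicographic order <_w. -/
set_option linter.unusedSectionVars false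

namespace Stmt4Aux

open Equiv Equiv.Perm

variable {α : Type*} [Fintype α] [DecidableEq α] [LinearOrder α]

lemma sc_apply (σ : Equiv.Perm α) (x : α) : σ.SameCycle x (σ x) := ⟨1, by simp⟩

lemma sc_fixed {σ : Equiv.Perm α} {x y : α} (hy : σ y = y) (h : σ.SameCycle x y) : x = y := by
  obtain ⟨i, hi⟩ := h.symm
  rw [zpow_apply_eq_self_of_apply_eq_self hy i] at hi
  exact hi.symm

lemma lemW {τ : Equiv.Perm α} {a b x y : α} (h : (Equiv.swap a b * τ).SameCycle x y) :
    τ.SameCycle x y ∨ τ.SameCycle a y ∨ τ.SameCycle b y := by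
  obtain ⟨i, -, hi⟩ := h.exists_pow_eq'
  induction i generalizing y with
  | zero =>
    simp only [pow_zero, Equiv.Perm.one_apply] at hi
    exact Or.inl (hi ▸ Equiv.Perm.SameCycle.refl τ x)
  | succ i ih =>
    rw [pow_succ', Equiv.Perm.mul_apply] at hi
    rcases ih ⟨i, by rw [zpow_natCast]⟩ rfl with h1 | h1 | h1 <;>
    · rw [Equiv.Perm.mul_apply] at hi
      by_cases hca : τ (((Equiv.swap a b * τ) ^ i) x) = a
      · rw [hca, Equiv.swap_apply_left] at hi
        exact Or.inr (Or.inr (hi ▸ Equiv.Perm.SameCycle.refl τ b))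
      · by_cases hcb : τ (((Equiv.swap a b * τ) ^ i) x) = b
        · rw [hcb, Equiv.swap_apply_right] at hi
          exact Or.inr (Or.inl (hi ▸ Equiv.Perm.SameCycle.refl τ a))
        · rw [Equiv.swap_apply_of_ne_of_ne hca hcb] at hi
          first
          | exact Or.inl (hi ▸ h1.trans (sc_apply τ _))
          | exact Or.inr (Or.inl (hi ▸ h1.trans (sc_apply τ _)))
          | exact Or.inr (Or.inr (hi ▸ h1.trans (sc_apply τ _)))



lemma lemD {τ : Equiv.Perm α} {a b : α} :
    (Equiv.swap a b * τ).SameCycle a b ∨ τ.SameCycle a b := by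
  classical
  set σ := Equiv.swap a b * τ with hσ
  have hex : ∃ k, 0 < k ∧ ((τ ^ k) b = a ∨ (τ ^ k) b = b) :=
    ⟨orderOf τ, orderOf_pos τ, Or.inr (by rw [pow_orderOf_eq_one]; rfl)⟩
  obtain ⟨hk0, hk⟩ := Nat.find_spec hex
  have hmin : ∀ j, 0 < j → j < Nat.find hex → (τ ^ j) b ≠ a ∧ (τ ^ j) b ≠ b := by
    intro j hj0 hjk
    have := Nat.find_min hex hjk
    push_neg at this
    exact this hj0
  obtain ⟨k, hk0, hk, hmin⟩ : ∃ k, 0 < k ∧ ((τ ^ k) b = a ∨ (τ ^ k) b = b) ∧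
      ∀ j, 0 < j → j < k → (τ ^ j) b ≠ a ∧ (τ ^ j) b ≠ b :=
    ⟨Nat.find hex, hk0, hk, hmin⟩
  have key : ∀ j, j < k → (σ ^ j) b = (τ ^ j) b := by
    intro j hj
    induction j with
    | zero => simp
    | succ i ih =>
      have hik : i < k := lt_trans (Nat.lt_succ_self i) hj
      have h1 : (σ ^ (i + 1)) b = σ ((τ ^ i) b) := by
        rw [pow_succ', Equiv.Perm.mul_apply, ih hik]
      rw [h1, hσ, Equiv.Perm.mul_apply, ← Equiv.Perm.mul_apply τ, ← pow_succ']
      exact Equiv.swap_apply_of_ne_of_ne (hmin _ (Nat.succ_pos i) hj).1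
        (hmin _ (Nat.succ_pos i) hj).2
  obtain ⟨k', rfl⟩ : ∃ k', k = k' + 1 := ⟨k - 1, (Nat.succ_pred_eq_of_pos hk0).symm⟩
  have hfin : (σ ^ (k' + 1)) b = Equiv.swap a b ((τ ^ (k' + 1)) b) := by
    rw [pow_succ', Equiv.Perm.mul_apply, key k' (Nat.lt_succ_self k'), hσ,
      Equiv.Perm.mul_apply, ← Equiv.Perm.mul_apply τ, ← pow_succ']
  rcases hk with h | h
  · exact Or.inr (Equiv.Perm.SameCycle.symm ⟨(k' + 1 : ℕ), by rw [zpow_natCast]; exact h⟩)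
  · rw [h, Equiv.swap_apply_right] at hfin
    exact Or.inl (Equiv.Perm.SameCycle.symm ⟨(k' + 1 : ℕ), by rw [zpow_natCast]; exact hfin⟩)


/-- The set of elements that are not minimal in their cycle. -/
def M (σ : Equiv.Perm α) : Finset α :=
  Finset.univ.filter fun m => ∃ x, σ.SameCycle x m ∧ x < m

lemma mem_M {σ : Equiv.Perm α} {m : α} : m ∈ M σ ↔ ∃ x, σ.SameCycle x m ∧ x < m := by
  simp [M]

lemma M_one : (M (1 : Equiv.Perm α)) = ∅ := by
  ext m
  simp only [mem_M, Finset.notMem_empty, iff_false, not_exists, not_and]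
  rintro x h
  rw [Equiv.Perm.sameCycle_one] at h
  subst h
  exact lt_irrefl _

/-- Weak cycle-containment lemma for right multiplication by a swap. -/
lemma lemW2 {σ' : Equiv.Perm α} {i m x y : α} (h : (σ' * Equiv.swap i m).SameCycle x y) :
    σ'.SameCycle x y ∨ σ'.SameCycle i y ∨ σ'.SameCycle m y := by
  have h1 : (Equiv.swap i m * σ'⁻¹).SameCycle x y := by
    have h2 := h.inv
    rwa [mul_inv_rev, Equiv.swap_inv] at h2
  rcases lemW h1 with h2 | h2 | h2
  · exact Or.inl h2.of_inv
  · exact Or.inr (Or.inl h2.of_inv)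
  · exact Or.inr (Or.inr h2.of_inv)

section Insertion

variable {σ σ' : Equiv.Perm α} {i m : α}
  (hσ : σ = σ' * Equiv.swap i m) (hfix : ∀ x, m ≤ x → σ' x = x) (him : i < m)

include hσ hfix him

lemma ins_apply_i : σ i = m := by
  rw [hσ, Equiv.Perm.mul_apply, Equiv.swap_apply_left, hfix m le_rfl]

lemma ins_sc_im : σ.SameCycle i m := by
  have := sc_apply σ i
  rwa [ins_apply_i hσ hfix him] at this

lemma lemIns1 {x y : α} (h : σ'.SameCycle x y) : σ.SameCycle x y := by
  have hσ' : σ' = σ * Equiv.swap i m := by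
    rw [hσ, mul_assoc, Equiv.swap_mul_self, mul_one]
  have him' := ins_sc_im hσ hfix him
  have key : σ.SameCycle y m → σ.SameCycle x y := by
    intro hym
    rcases lemW2 (hσ' ▸ h.symm) with h2 | h2 | h2
    · exact h2.symm
    · exact (h2.symm.trans him').trans hym.symm
    · exact h2.symm.trans hym.symm
  rcases lemW2 (hσ' ▸ h) with h1 | h1 | h1
  · exact h1
  · exact key (h1.symm.trans him')
  · exact key h1.symm

lemma lemIns2 {x y : α} (h : σ.SameCycle x y) (hx : x ≠ m) (hy : y ≠ m) :
    σ'.SameCycle x y := by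
  have hfm : σ' m = m := hfix m le_rfl
  rcases lemW2 (hσ ▸ h) with h1 | h1 | h1
  · exact h1
  · rcases lemW2 (hσ ▸ h.symm) with h2 | h2 | h2
    · exact h2.symm
    · exact h2.symm.trans h1
    · exact absurd (sc_fixed hfm h2.symm) hx
  · exact absurd (sc_fixed hfm h1.symm) hy

lemma lemIns3 {x : α} (h : σ.SameCycle x m) : x = m ∨ σ'.SameCycle i x := by
  have hfm : σ' m = m := hfix m le_rfl
  rcases lemW2 (hσ ▸ h.symm) with h1 | h1 | h1
  · exact Or.inl (sc_fixed hfm h1.symm)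
  · exact Or.inr h1
  · exact Or.inl (sc_fixed hfm h1.symm)

end Insertion


lemma lemMin {τ : Equiv.Perm α} {m : α} (hm : m ∉ M τ) :
    ∀ z, τ.SameCycle z m → m ≤ z := by
  intro z hz
  by_contra hlt
  exact hm (mem_M.mpr ⟨z, hz, lt_of_not_ge hlt⟩)

lemma lemDiff {τ : Equiv.Perm α} {a b m : α} (hm : m ∈ M (Equiv.swap a b * τ))
    (hm' : m ∉ M τ) :
    (τ.SameCycle a m ∨ τ.SameCycle b m) ∧
      ∃ x, x < m ∧ ¬τ.SameCycle x m ∧ (τ.SameCycle a x ∨ τ.SameCycle b x) := by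
  obtain ⟨x, hxm, hxlt⟩ := mem_M.mp hm
  have hnxm : ¬τ.SameCycle x m := fun h => absurd (lemMin hm' x h) (not_le.mpr hxlt)
  constructor
  · rcases lemW hxm with h | h | h
    · exact absurd h hnxm
    · exact Or.inl h
    · exact Or.inr h
  · refine ⟨x, hxlt, hnxm, ?_⟩
    rcases lemW hxm.symm with h | h | h
    · exact absurd h.symm hnxm
    · exact Or.inl h
    · exact Or.inr h

lemma lemSub {τ : Equiv.Perm α} {a b m m' : α} (hm : m ∈ M (Equiv.swap a b * τ))
    (hmn : m ∉ M τ) (hm' : m' ∈ M (Equiv.swap a b * τ)) (hmn' : m' ∉ M τ) : m = m' := by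
  obtain ⟨hcm, x, hx1, hx2, hx3⟩ := lemDiff hm hmn
  obtain ⟨hcm', x', hx1', hx2', hx3'⟩ := lemDiff hm' hmn'
  have symmCase : ∀ {c : α}, τ.SameCycle c m → τ.SameCycle c m' → m = m' := by
    intro c h1 h2
    exact le_antisymm (lemMin hmn m' (h2.symm.trans h1)) (lemMin hmn' m (h1.symm.trans h2))
  rcases hcm with h1 | h1 <;> rcases hcm' with h2 | h2
  · exact symmCase h1 h2
  · -- m in cycle of a, m' in cycle of b
    exfalso
    have hxb : τ.SameCycle b x := by
      rcases hx3 with h | h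
      · exact absurd (h.symm.trans h1) hx2
      · exact h
    have hxa' : τ.SameCycle a x' := by
      rcases hx3' with h | h
      · exact h
      · exact absurd (h.symm.trans h2) hx2'
    have h4 : m' ≤ x := lemMin hmn' x (hxb.symm.trans h2)
    have h5 : m ≤ x' := lemMin hmn x' (hxa'.symm.trans h1)
    exact absurd (lt_trans (lt_of_le_of_lt h4 hx1) (lt_of_le_of_lt h5 hx1')) (lt_irrefl m')
  · exfalso
    have hxa : τ.SameCycle a x := by
      rcases hx3 with h | h
      · exact h
      · exact absurd (h.symm.trans h1) hx2
    have hxb' : τ.SameCycle b x' := by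
      rcases hx3' with h | h
      · exact absurd (h.symm.trans h2) hx2'
      · exact h
    have h4 : m' ≤ x := lemMin hmn' x (hxa.symm.trans h2)
    have h5 : m ≤ x' := lemMin hmn x' (hxb'.symm.trans h1)
    exact absurd (lt_trans (lt_of_le_of_lt h4 hx1) (lt_of_le_of_lt h5 hx1')) (lt_irrefl m')
  · exact symmCase h1 h2

lemma lemCard {τ : Equiv.Perm α} {a b : α} :
    (M (Equiv.swap a b * τ)).card ≤ (M τ).card + 1 := by
  by_cases h : M (Equiv.swap a b * τ) ⊆ M τ
  · exact le_trans (Finset.card_le_card h) (Nat.le_succ _)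
  · obtain ⟨m₀, hm₀, hm₀n⟩ := Finset.not_subset.mp h
    have hsub : M (Equiv.swap a b * τ) ⊆ insert m₀ (M τ) := by
      intro m hm
      by_cases hmn : m ∈ M τ
      · exact Finset.mem_insert_of_mem hmn
      · exact Finset.mem_insert.mpr (Or.inl (lemSub hm hmn hm₀ hm₀n))
    exact le_trans (Finset.card_le_card hsub) (Finset.card_insert_le _ _)

lemma lemBound : ∀ v : List (α × α),
    (M ((v.map fun p => Equiv.swap p.1 p.2).prod)).card ≤ v.length
  | [] => by simp [M_one]
  | p :: v => by
    simp only [List.map_cons, List.prod_cons, List.length_cons]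
    exact le_trans lemCard (Nat.succ_le_succ (lemBound v))

lemma prodSupp {c : α} : ∀ (u : List (α × α)), (∀ p ∈ u, p.1 < c ∧ p.2 < c) →
    ∀ x, c ≤ x → (u.map fun p => Equiv.swap p.1 p.2).prod x = x
  | [], _, x, _ => rfl
  | p :: u, h, x, hx => by
    simp only [List.map_cons, List.prod_cons, Equiv.Perm.mul_apply]
    rw [prodSupp u (fun q hq => h q (List.mem_cons_of_mem _ hq)) x hx,
      Equiv.swap_apply_of_ne_of_ne]
    · exact ((lt_of_lt_of_le (h p List.mem_cons_self).1 hx).ne')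
    · exact ((lt_of_lt_of_le (h p List.mem_cons_self).2 hx).ne')


lemma lemL1 (w : List (α × α)) (hw1 : ∀ p ∈ w, p.1 < p.2)
    (hw2 : List.Chain' (· < ·) (w.map Prod.snd)) :
    (∀ m', m' ∈ M ((w.map fun p => Equiv.swap p.1 p.2).prod) ↔ m' ∈ w.map Prod.snd) ∧
    ∀ i₁ j₁ w', w = (i₁, j₁) :: w' →
      ((w.map fun p => Equiv.swap p.1 p.2).prod).SameCycle i₁ j₁ ∧
      ∀ x, ((w.map fun p => Equiv.swap p.1 p.2).prod).SameCycle x j₁ → i₁ ≤ x := by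
  induction w using List.reverseRecOn with
  | nil =>
    constructor
    · intro m'; simp [M_one]
    · intro i₁ j₁ w' h; exact absurd h (by simp)
  | append_singleton w' p ih =>
    have hw1' : ∀ q ∈ w', q.1 < q.2 := fun q hq => hw1 q (List.mem_append_left _ hq)
    rw [List.map_append] at hw2
    have hpw := List.isChain_iff_pairwise.mp hw2
    obtain ⟨hpw1, -, hpw3⟩ := List.pairwise_append.mp hpw
    have hw2' : List.Chain' (· < ·) (w'.map Prod.snd) := List.isChain_iff_pairwise.mpr hpw1
    have hlt : ∀ y ∈ w'.map Prod.snd, y < p.2 := fun y hy =>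
      hpw3 y hy p.2 (List.mem_singleton_self _)
    have him : p.1 < p.2 := hw1 p (List.mem_append_right _ (List.mem_singleton_self _))
    have hfix : ∀ x, p.2 ≤ x → (w'.map fun q => Equiv.swap q.1 q.2).prod x = x := by
      refine prodSupp w' (fun q hq => ⟨?_, ?_⟩) 
      · exact lt_trans (hw1' q hq) (hlt q.2 (List.mem_map_of_mem hq))
      · exact hlt q.2 (List.mem_map_of_mem hq)
    obtain ⟨ih1, ih2⟩ := ih hw1' hw2'
    simp only [List.map_append, List.prod_append, List.map_cons, List.map_nil,
      List.prod_cons, List.prod_nil, mul_one]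
    constructor
    · intro m'
      simp only [List.mem_append, List.mem_singleton]
      by_cases hm' : m' = p.2
      · subst hm'
        simp only [or_true, iff_true]
        exact mem_M.mpr ⟨p.1, ins_sc_im rfl hfix him, him⟩
      · simp only [hm', or_false]
        constructor
        · intro hm
          obtain ⟨x, hxm, hxlt⟩ := mem_M.mp hm
          have hxne : x ≠ p.2 := by
            intro hxe
            subst hxe
            have hfm' : ((w'.map fun q => Equiv.swap q.1 q.2).prod * Equiv.swap p.1 p.2) m' = m' := by
              rw [Equiv.Perm.mul_apply,
                Equiv.swap_apply_of_ne_of_ne (lt_trans him hxlt).ne' hm',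
                hfix m' (le_of_lt hxlt)]
            exact absurd (sc_fixed hfm' hxm) (ne_of_lt hxlt)
          exact (ih1 m').mp (mem_M.mpr ⟨x, lemIns2 rfl hfix him hxm hxne hm', hxlt⟩)
        · intro hm
          obtain ⟨x, hxm, hxlt⟩ := mem_M.mp ((ih1 m').mpr hm)
          exact mem_M.mpr ⟨x, lemIns1 rfl hfix him hxm, hxlt⟩
    · intro i₁ j₁ w'' hweq
      rcases w' with - | ⟨q, w₃⟩
      · simp only [List.nil_append, List.cons.injEq] at hweq
        obtain ⟨rfl, rfl⟩ := hweq
        refine ⟨ins_sc_im rfl hfix him, fun x hx => ?_⟩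
        rcases lemIns3 rfl hfix him hx with h | h
        · exact h ▸ him.le
        · simp only [List.map_nil, List.prod_nil, Equiv.Perm.sameCycle_one] at h
          exact le_of_eq h
      · rw [List.cons_append, List.cons.injEq] at hweq
        obtain ⟨rfl, rfl⟩ := hweq
        obtain ⟨ihsc, ihmin⟩ := ih2 i₁ j₁ w₃ rfl
        have hj₁m : j₁ < p.2 := hlt j₁ (by simp)
        have hij : i₁ < j₁ := hw1' (i₁, j₁) List.mem_cons_self
        refine ⟨lemIns1 rfl hfix him ihsc, fun x hx => ?_⟩
        by_cases hxm : x = p.2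
        · subst hxm
          exact le_of_lt (lt_trans hij hj₁m)
        · exact ihmin x (lemIns2 rfl hfix him hx hxm (ne_of_lt hj₁m))

lemma lemL1card (w : List (α × α)) (hw1 : ∀ p ∈ w, p.1 < p.2)
    (hw2 : List.Chain' (· < ·) (w.map Prod.snd)) :
    (M ((w.map fun p => Equiv.swap p.1 p.2).prod)).card = w.length := by
  have h1 : M ((w.map fun p => Equiv.swap p.1 p.2).prod) = (w.map Prod.snd).toFinset := by
    ext m'
    rw [(lemL1 w hw1 hw2).1 m', List.mem_toFinset]
  have hnd : (w.map Prod.snd).Nodup := (List.isChain_iff_pairwise.mp hw2).nodup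
  rw [h1, List.toFinset_card_of_nodup hnd, List.length_map]


lemma badCase {w' tl : List (α × α)} {i₁ j₁ a b : α}
    (hw1 : ∀ p ∈ (i₁, j₁) :: w', p.1 < p.2)
    (hw2 : List.Chain' (· < ·) (((i₁, j₁) :: w').map Prod.snd))
    (hab : a < b)
    (heq : ((((a, b) :: tl).map fun p => Equiv.swap p.1 p.2).prod)
         = ((((i₁, j₁) :: w').map fun p => Equiv.swap p.1 p.2).prod)
         )
    (hble : b ≤ j₁) (hbad : b = j₁ → a < i₁) :
    ((i₁, j₁) :: w').length < ((a, b) :: tl).length := by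
  by_contra hc
  push_neg at hc
  have hwlen : (M ((((i₁, j₁) :: w').map fun p => Equiv.swap p.1 p.2).prod)).card
      = w'.length + 1 := by
    rw [lemL1card _ hw1 hw2, List.length_cons]
  have hvlen := lemBound (((a, b) :: tl))
  rw [heq, hwlen] at hvlen
  have htl : tl.length = w'.length := by
    simp only [List.length_cons] at hc hvlen ⊢
    omega
  have hστ : (((i₁, j₁) :: w').map fun p => Equiv.swap p.1 p.2).prod
      = Equiv.swap a b * (tl.map fun p => Equiv.swap p.1 p.2).prod := by
    rw [← heq]
    simp only [List.map_cons, List.prod_cons]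
  have hMτ : (M ((tl.map fun p => Equiv.swap p.1 p.2).prod)).card ≤ tl.length := lemBound tl
  obtain ⟨m, hmσ, hmτ⟩ : ∃ m ∈ M ((((i₁, j₁) :: w').map fun p => Equiv.swap p.1 p.2).prod),
      m ∉ M ((tl.map fun p => Equiv.swap p.1 p.2).prod) := by
    rw [← Finset.not_subset]
    intro hsub
    have := Finset.card_le_card hsub
    rw [hwlen] at this
    omega
  obtain ⟨hcm, x, hx1, hx2, hx3⟩ := lemDiff (hστ ▸ hmσ) hmτ
  have hMin := lemMin hmτ
  have hjm : j₁ ≤ m := by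
    have hmem := ((lemL1 _ hw1 hw2).1 m).mp hmσ
    rw [List.map_cons] at hmem
    rcases List.mem_cons.mp hmem with h | h
    · exact le_of_eq h.symm
    · rw [List.map_cons] at hw2
      exact le_of_lt ((List.pairwise_cons.mp (List.isChain_iff_pairwise.mp hw2)).1 m h)
  rcases hcm with h | h
  · exact absurd (((hMin a h).trans_lt hab).trans_le (hble.trans hjm)) (lt_irrefl m)
  · have hmb : m ≤ b := hMin b h
    have hbj : b = j₁ := le_antisymm hble (hjm.trans hmb)
    have hai : a < i₁ := hbad hbj
    have hnab : ¬((tl.map fun p => Equiv.swap p.1 p.2).prod).SameCycle a b := by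
      intro hcab
      rcases hx3 with h' | h'
      · exact hx2 (h'.symm.trans (hcab.trans h))
      · exact hx2 (h'.symm.trans h)
    have hscab : ((((i₁, j₁) :: w').map fun p => Equiv.swap p.1 p.2).prod).SameCycle a b := by
      rcases lemD (τ := (tl.map fun p => Equiv.swap p.1 p.2).prod) (a := a) (b := b) with h' | h'
      · rw [hστ]; exact h'
      · exact absurd h' hnab
    rw [hbj] at hscab
    have hmin1 := ((lemL1 _ hw1 hw2).2 i₁ j₁ w' rfl).2
    have : i₁ ≤ a := hmin1 a hscab
    exact absurd this (not_le.mpr hai)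

end Stmt4Aux

/-- If `w ∈ L_n` and `v` is any word over `T_n` with `v ≠ w` defining the
same permutation as `w`, then `w <_w v`, where `<_w` compares first by length and then
lexicographically using the symbol order `(h,i) <_s (j,k) ↔ i < k ∨ (i = k ∧ h < j)`. -/
theorem stmt4 (n : ℕ) (hn : 2 ≤ n) (w v : List (Fin n × Fin n))
    (hw : (∀ p ∈ w, p.1 < p.2) ∧ List.Chain' (· < ·) (w.map Prod.snd))
    (hv : ∀ p ∈ v, p.1 < p.2)
    (hne : v ≠ w)
    (heq : (v.map fun p => Equiv.swap p.1 p.2).prod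
         = (w.map fun p => Equiv.swap p.1 p.2).prod) :
    w.length < v.length ∨
      (w.length = v.length ∧
        List.Lex (fun p q : Fin n × Fin n => p.2 < q.2 ∨ (p.2 = q.2 ∧ p.1 < q.1)) w v) := by
  clear hn
  induction v generalizing w with
  | nil =>
    exfalso
    rcases w with - | ⟨⟨i₁, j₁⟩, w'⟩
    · exact hne rfl
    · have hL := (Stmt4Aux.lemL1 _ hw.1 hw.2).1 j₁
      rw [← heq] at hL
      simp only [List.map_nil, List.prod_nil] at hL
      have : j₁ ∈ Stmt4Aux.M (1 : Equiv.Perm (Fin n)) := hL.mpr (by simp)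
      rw [Stmt4Aux.M_one] at this
      exact absurd this (Finset.notMem_empty _)
  | cons hd tl ih =>
    obtain ⟨a, b⟩ := hd
    rcases w with - | ⟨⟨i₁, j₁⟩, w'⟩
    · exact Or.inl (by simp)
    · have hab : a < b := hv (a, b) List.mem_cons_self
      have hlen : ((i₁, j₁) :: w').length ≤ ((a, b) :: tl).length := by
        have h1 := Stmt4Aux.lemBound ((a, b) :: tl)
        rw [heq, Stmt4Aux.lemL1card _ hw.1 hw.2] at h1
        exact h1
      by_cases hhd : ((a, b) : Fin n × Fin n) = (i₁, j₁)
      · rw [Prod.mk.injEq] at hhd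
        obtain ⟨rfl, rfl⟩ := hhd
        have heq' : (tl.map fun p => Equiv.swap p.1 p.2).prod
            = (w'.map fun p => Equiv.swap p.1 p.2).prod := by
          simp only [List.map_cons, List.prod_cons] at heq
          exact mul_left_cancel heq
        by_cases htw : tl = w'
        · exact absurd (by rw [htw]) hne
        · have hw' : (∀ p ∈ w', p.1 < p.2) ∧ List.Chain' (· < ·) (w'.map Prod.snd) :=
            ⟨fun p hp => hw.1 p (List.mem_cons_of_mem _ hp), by
              have h2 := hw.2
              rw [List.map_cons] at h2
              exact h2.tail⟩
          have hv' : ∀ p ∈ tl, p.1 < p.2 := fun p hp => hv p (List.mem_cons_of_mem _ hp)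
          rcases ih w' hw' hv' htw heq' with h | ⟨h1, h2⟩
          · exact Or.inl (by simpa using Nat.succ_lt_succ h)
          · exact Or.inr ⟨by simpa using h1, List.Lex.cons h2⟩
      · rcases lt_trichotomy j₁ b with hj | hj | hj
        · rcases lt_or_eq_of_le hlen with h | h
          · exact Or.inl h
          · exact Or.inr ⟨h, List.Lex.rel (Or.inl hj)⟩
        · rcases lt_trichotomy i₁ a with hi | hi | hi
          · rcases lt_or_eq_of_le hlen with h | h
            · exact Or.inl h
            · exact Or.inr ⟨h, List.Lex.rel (Or.inr ⟨hj, hi⟩)⟩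
          · exact absurd (by rw [hi, hj]) hhd
          · exact Or.inl (Stmt4Aux.badCase hw.1 hw.2 hab heq (le_of_eq hj.symm)
              (fun _ => hi))
        · exact Or.inl (Stmt4Aux.badCase hw.1 hw.2 hab heq (le_of_lt hj)
            (fun hbj => absurd hbj (ne_of_lt hj)))
end

section
/- If w ∈ L_n and v is any word over T_n defining the same permutation as w, then the length of w is at most the length of v; that is, every word of L_n has minimal length among all words of transpositions defining the same permutation. -/
open Equiv LinearMap Module Submodule

namespace Stmt5Aux

variable {n : ℕ}

/-- The linear map `f ↦ f ∘ σ - f` on `Fin n → ℚ`. -/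
def A (σ : Equiv.Perm (Fin n)) : (Fin n → ℚ) →ₗ[ℚ] (Fin n → ℚ) :=
  LinearMap.funLeft ℚ ℚ σ - LinearMap.id

lemma A_apply (σ : Equiv.Perm (Fin n)) (f : Fin n → ℚ) (x : Fin n) :
    A σ f x = f (σ x) - f x := rfl

lemma A_one : A (1 : Equiv.Perm (Fin n)) = 0 := by
  ext f x; simp [A_apply]

lemma mem_ker_A {σ : Equiv.Perm (Fin n)} {f : Fin n → ℚ} :
    f ∈ ker (A σ) ↔ ∀ x, f (σ x) = f x := by
  simp [LinearMap.mem_ker, funext_iff, A_apply, sub_eq_zero]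

lemma A_swap_apply (a b : Fin n) (f : Fin n → ℚ) :
    A (Equiv.swap a b) f = (f b - f a) • (Pi.single a 1 - Pi.single b 1) := by
  funext x
  rcases eq_or_ne x a with rfl | hxa
  · rcases eq_or_ne x b with rfl | hxb
    · simp [A_apply]
    · simp [A_apply, Pi.single_apply, hxb, Equiv.swap_apply_left, hxb.symm]
  · rcases eq_or_ne x b with rfl | hxb
    · simp [A_apply, Pi.single_apply, hxa, Equiv.swap_apply_right, hxa.symm]
    · simp [A_apply, Pi.single_apply, hxa, hxb, Equiv.swap_apply_of_ne_of_ne hxa hxb]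

lemma A_swap_mul (a b : Fin n) (π : Equiv.Perm (Fin n)) (f : Fin n → ℚ) :
    A (Equiv.swap a b * π) f
      = A π f + (f b - f a) • (LinearMap.funLeft ℚ ℚ π (Pi.single a 1 - Pi.single b 1)) := by
  funext x
  have h := congrFun (A_swap_apply a b f) (π x)
  simp only [A_apply, Equiv.Perm.mul_apply, Pi.add_apply, Pi.smul_apply,
    LinearMap.funLeft_apply, Function.comp_apply] at *
  rw [show f (Equiv.swap a b (π x)) - f x
      = (f (Equiv.swap a b (π x)) - f (π x)) + (f (π x) - f x) by ring, h]
  ring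

/-- Upper bound: the rank of `A` of a product of `t` transpositions is at most `t`. -/
lemma upper (v : List (Fin n × Fin n)) :
    finrank ℚ (range (A ((v.map fun p => Equiv.swap p.1 p.2).prod))) ≤ v.length := by
  induction v with
  | nil => simp [A_one]
  | cons p v ih =>
      set π := ((v.map fun p => Equiv.swap p.1 p.2).prod) with hπ
      have hle : range (A (Equiv.swap p.1 p.2 * π))
          ≤ range (A π) ⊔ (ℚ ∙ (LinearMap.funLeft ℚ ℚ π (Pi.single p.1 1 - Pi.single p.2 1))) := by
        rintro x ⟨f, rfl⟩
        rw [A_swap_mul]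
        exact Submodule.add_mem_sup (LinearMap.mem_range_self _ f)
          (Submodule.smul_mem _ _ (Submodule.mem_span_singleton_self _))
      have h1 : finrank ℚ (range (A (Equiv.swap p.1 p.2 * π)))
          ≤ finrank ℚ (range (A π)) + 1 := by
        refine le_trans (Submodule.finrank_mono hle) ?_
        refine le_trans (Submodule.finrank_add_le_finrank_add_finrank _ _) ?_
        gcongr
        rcases eq_or_ne (LinearMap.funLeft ℚ ℚ π (Pi.single p.1 1 - Pi.single p.2 1)) 0 with h0 | h0
        · rw [h0, Submodule.span_zero_singleton]; simp
        · rw [finrank_span_singleton h0]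
      simp only [List.map_cons, List.prod_cons, List.length_cons]
      exact h1.trans (Nat.add_le_add_right ih 1)

lemma fixed_of_forall (l : List (Fin n × Fin n)) (b : Fin n)
    (h : ∀ p ∈ l, p.1 ≠ b ∧ p.2 ≠ b) :
    ((l.map fun p => Equiv.swap p.1 p.2).prod) b = b := by
  induction l with
  | nil => simp
  | cons p l ih =>
      simp only [List.map_cons, List.prod_cons, Equiv.Perm.mul_apply]
      rw [ih fun q hq => h q (List.mem_cons_of_mem _ hq),
        Equiv.swap_apply_of_ne_of_ne (h p List.mem_cons_self).1.symm
          (h p List.mem_cons_self).2.symm]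

lemma ker_step (σ : Equiv.Perm (Fin n)) (a b : Fin n) (hb : σ b = b) :
    ker (A (σ * Equiv.swap a b))
      = ker (A σ) ⊓ ker ((LinearMap.proj a : (Fin n → ℚ) →ₗ[ℚ] ℚ) - LinearMap.proj b) := by
  ext f
  rw [Submodule.mem_inf, mem_ker_A, mem_ker_A, LinearMap.mem_ker]
  simp only [Equiv.Perm.mul_apply, LinearMap.sub_apply, LinearMap.proj_apply, sub_eq_zero]
  constructor
  · intro h
    have hab : f a = f b := by
      have := h a
      rw [Equiv.swap_apply_left, hb] at this
      exact this.symm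
    refine ⟨fun x => ?_, hab⟩
    rcases eq_or_ne x a with rfl | hxa
    · have := h b
      rw [Equiv.swap_apply_right] at this
      rw [this, hab]
    rcases eq_or_ne x b with rfl | hxb
    · rw [hb]
    · have := h x
      rwa [Equiv.swap_apply_of_ne_of_ne hxa hxb] at this
  · rintro ⟨h, hab⟩ x
    rcases eq_or_ne x a with rfl | hxa
    · rw [Equiv.swap_apply_left, hb, hab]
    rcases eq_or_ne x b with rfl | hxb
    · rw [Equiv.swap_apply_right, h a, hab]
    · rw [Equiv.swap_apply_of_ne_of_ne hxa hxb, h x]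

lemma finrank_inf_ker (p : Submodule ℚ (Fin n → ℚ)) (φ : (Fin n → ℚ) →ₗ[ℚ] ℚ)
    (f0 : Fin n → ℚ) (hf0 : f0 ∈ p) (hφ : φ f0 ≠ 0) :
    finrank ℚ (p ⊓ ker φ : Submodule ℚ (Fin n → ℚ)) + 1 = finrank ℚ p := by
  set ψ := φ.domRestrict p with hψ
  have hrange : range ψ = ⊤ := by
    rw [Submodule.eq_top_iff']
    intro x
    refine ⟨(x / φ f0) • ⟨f0, hf0⟩, ?_⟩
    simp [hψ, LinearMap.domRestrict_apply, div_mul_cancel₀ _ hφ]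
  have h1 := ψ.finrank_range_add_finrank_ker
  rw [hrange, finrank_top, finrank_self] at h1
  have h2 : ker ψ = Submodule.comap p.subtype (ker φ) := LinearMap.ker_domRestrict p φ
  have h3 : finrank ℚ (ker ψ) = finrank ℚ (p ⊓ ker φ : Submodule ℚ (Fin n → ℚ)) := by
    rw [← Submodule.finrank_map_subtype_eq p (ker ψ), h2, Submodule.map_comap_subtype]
  rw [h3] at h1
  omega

/-- Lower bound: for a word in `L_n`, the kernel of `A` of its product has
dimension exactly `n - t`. -/
lemma lower (w : List (Fin n × Fin n)) (hw1 : ∀ p ∈ w, p.1 < p.2)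
    (hw2 : List.Chain' (· < ·) (w.map Prod.snd)) :
    finrank ℚ (ker (A ((w.map fun p => Equiv.swap p.1 p.2).prod))) + w.length = n := by
  induction w using List.reverseRecOn with
  | nil =>
      rw [List.length_nil, Nat.add_zero, List.map_nil, List.prod_nil, A_one, LinearMap.ker_zero,
        finrank_top, Module.finrank_fintype_fun_eq_card, Fintype.card_fin]
  | append_singleton w p ih =>
      have hw1' : ∀ q ∈ w, q.1 < q.2 := fun q hq =>
        hw1 q (List.mem_append_left _ hq)
      rw [List.map_append] at hw2
      have hpw : List.Pairwise (· < ·) (w.map Prod.snd ++ [p.2]) := by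
        simpa using List.isChain_iff_pairwise.mp hw2
      have hw2' : List.Chain' (· < ·) (w.map Prod.snd) :=
        (List.isChain_append.mp hw2).1
      have hlt : ∀ q ∈ w, q.2 < p.2 := by
        intro q hq
        exact (List.pairwise_append.mp hpw).2.2 q.2
          (List.mem_map_of_mem (f := Prod.snd) hq) p.2 (List.mem_singleton_self _)
      set σ' := ((w.map fun p => Equiv.swap p.1 p.2).prod) with hσ'
      have hfix : σ' p.2 = p.2 := by
        refine fixed_of_forall w p.2 fun q hq => ⟨?_, ?_⟩
        · exact ne_of_lt (lt_trans (hw1' q hq) (hlt q hq))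
        · exact ne_of_lt (hlt q hq)
      have hprod : (((w ++ [p]).map fun p => Equiv.swap p.1 p.2).prod)
          = σ' * Equiv.swap p.1 p.2 := by
        rw [List.map_append, List.prod_append]
        simp [hσ']
      have hpne : p.1 ≠ p.2 := ne_of_lt (hw1 p (List.mem_append_right _ (List.mem_singleton_self _)))
      have hf0 : (Pi.single p.2 1 : Fin n → ℚ) ∈ ker (A σ') := by
        rw [mem_ker_A]
        intro x
        rcases eq_or_ne x p.2 with rfl | hx
        · rw [hfix]
        · rw [Pi.single_eq_of_ne hx, Pi.single_eq_of_ne]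
          intro hcon
          exact hx (σ'.injective (by rw [hcon, hfix]))
      have hφ : (((LinearMap.proj p.1 : (Fin n → ℚ) →ₗ[ℚ] ℚ) - LinearMap.proj p.2 :
          (Fin n → ℚ) →ₗ[ℚ] ℚ)) (Pi.single p.2 1) ≠ 0 := by
        simp [LinearMap.proj_apply, Pi.single_eq_of_ne hpne]
      have hdrop := finrank_inf_ker (ker (A σ'))
        ((LinearMap.proj p.1 : (Fin n → ℚ) →ₗ[ℚ] ℚ) - LinearMap.proj p.2)
        (Pi.single p.2 1) hf0 hφ
      have hih := ih hw1' hw2'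
      rw [hprod, ker_step σ' p.1 p.2 hfix, List.length_append, List.length_singleton]
      omega

end Stmt5Aux

/-- If `w ∈ L_n` and `v` is any word over `T_n` defining the same
permutation as `w`, then the length of `w` is at most the length of `v`; i.e., every
word of `L_n` has minimal length among all words of transpositions defining the same
permutation. -/
theorem stmt5 (n : ℕ) (hn : 2 ≤ n) (w v : List (Fin n × Fin n))
    (hw : (∀ p ∈ w, p.1 < p.2) ∧ List.Chain' (· < ·) (w.map Prod.snd))
    (hv : ∀ p ∈ v, p.1 < p.2)
    (heq : (v.map fun p => Equiv.swap p.1 p.2).prod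
         = (w.map fun p => Equiv.swap p.1 p.2).prod) :
    w.length ≤ v.length := by
  obtain ⟨hw1, hw2⟩ := hw
  have hlow := Stmt5Aux.lower w hw1 hw2
  have hrn := (Stmt5Aux.A ((w.map fun p => Equiv.swap p.1 p.2).prod)).finrank_range_add_finrank_ker
  rw [Module.finrank_fintype_fun_eq_card, Fintype.card_fin] at hrn
  have hup := Stmt5Aux.upper (n := n) v
  rw [heq] at hup
  omega
end

section
/- The sum over all permutations σ ∈ S_n of m(σ) equals n!·(n − H_n), where H_n = ∑_{i=1}^n 1/i is the n-th harmonic number; equivalently, the expected minimal number of transpositions in a decomposition of a uniformly random permutation of {1,…,n} is n − H_n. -/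
set_option linter.unusedSectionVars false

open Equiv Equiv.Perm Finset Module


/-- The minimal number of transpositions needed to write `σ` as a product
(`0` for the identity). -/
noncomputable def minSwaps (n : ℕ) (σ : Equiv.Perm (Fin n)) : ℕ :=
  sInf {t : ℕ | ∃ l : List (Equiv.Perm (Fin n)),
    l.length = t ∧ (∀ τ ∈ l, τ.IsSwap) ∧ l.prod = σ}

namespace Stmt6Aux

variable {α : Type*} [Fintype α] [DecidableEq α] [LinearOrder α]

/-- `F σ` = sum over cycles of (length - 1); the minimal number of transpositions. -/
def F (σ : Perm α) : ℕ := (σ.cycleType.map (fun k => k - 1)).sum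

lemma F_one : F (1 : Perm α) = 0 := by simp [F]

lemma F_isCycle {σ : Perm α} (h : σ.IsCycle) : F σ = σ.support.card - 1 := by
  simp [F, h.cycleType]

lemma F_disjoint_mul {σ τ : Perm α} (h : Perm.Disjoint σ τ) :
    F (σ * τ) = F σ + F τ := by
  simp [F, h.cycleType_mul]

lemma multiset_sub_one {m : Multiset ℕ} (h : ∀ k ∈ m, 1 ≤ k) :
    (m.map (fun k => k - 1)).sum + Multiset.card m = m.sum := by
  induction m using Multiset.induction with
  | empty => simp
  | cons a s ih =>
    have ha : 1 ≤ a := h a (Multiset.mem_cons_self a s)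
    have := ih (fun k hk => h k (Multiset.mem_cons_of_mem hk))
    simp only [Multiset.map_cons, Multiset.sum_cons, Multiset.card_cons]
    omega

/-- number of cycles including fixed points -/
def C (σ : Perm α) : ℕ :=
  σ.cycleFactorsFinset.card + (Finset.univ.filter fun x => σ x = x).card

lemma F_add_C (σ : Perm α) : F σ + C σ = Fintype.card α := by
  have h1 : (σ.cycleType.map (fun k => k - 1)).sum + Multiset.card σ.cycleType
      = σ.cycleType.sum :=
    multiset_sub_one (fun k hk => le_of_lt (one_lt_of_mem_cycleType hk))
  have h2 : σ.cycleType.sum = σ.support.card := sum_cycleType σ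
  have h3 : Multiset.card σ.cycleType = σ.cycleFactorsFinset.card := by
    simp [cycleType, Multiset.card_map]
  have h4 : σ.support.card + (Finset.univ.filter fun x => σ x = x).card
      = Fintype.card α := by
    have := Finset.card_filter_add_card_filter_not (s := (Finset.univ : Finset α))
      (p := fun x => σ x ≠ x)
    rw [← Finset.card_univ]
    convert this using 3
    all_goals (ext x; simp)
  unfold F C
  omega


lemma zipWith_swap_isSwap : ∀ (l : List α), l.Nodup →
    ∀ τ ∈ List.zipWith Equiv.swap l l.tail, τ.IsSwap
  | [], _, τ, h => by simp at h
  | [a], _, τ, h => by simp at h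
  | (a :: b :: t), hn, τ, h => by
    simp only [List.tail_cons, List.zipWith_cons_cons, List.mem_cons] at h
    rcases h with h | h
    · exact ⟨a, b, by simp at hn; tauto, h⟩
    · exact zipWith_swap_isSwap (b :: t) (by simp_all) τ h

lemma exists_swap_list (σ : Perm α) :
    ∃ l : List (Perm α), l.length = (σ.cycleType.map (fun k => k - 1)).sum
      ∧ (∀ τ ∈ l, τ.IsSwap) ∧ l.prod = σ := by
  induction σ using cycle_induction_on with
  | base_one => exact ⟨[], by simp, by simp, by simp⟩
  | base_cycles σ hσ =>
    obtain ⟨x, hx, -⟩ := id hσ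
    set l := σ.toList x with hl
    have hnd : l.Nodup := nodup_toList σ x
    have hform : l.formPerm = σ := by
      rw [hl, formPerm_toList, hσ.cycleOf_eq hx]
    have hlen : l.length = σ.support.card := by
      rw [hl, Equiv.Perm.length_toList, hσ.cycleOf_eq hx]
    refine ⟨List.zipWith Equiv.swap l l.tail, ?_, zipWith_swap_isSwap l hnd, hform⟩
    have h2 : 2 ≤ σ.support.card := hσ.two_le_card_support
    rw [List.length_zipWith, List.length_tail, hσ.cycleType]
    have : (Multiset.map (fun k => k - 1) {σ.support.card}).sum = σ.support.card - 1 := by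
      simp
    rw [this, hlen]
    omega
  | induction_disjoint σ τ hd hc ih1 ih2 =>
    obtain ⟨l1, hlen1, hsw1, hp1⟩ := ih1
    obtain ⟨l2, hlen2, hsw2, hp2⟩ := ih2
    refine ⟨l1 ++ l2, ?_, ?_, by rw [List.prod_append, hp1, hp2]⟩
    · rw [List.length_append, hlen1, hlen2, hd.cycleType_mul]
      simp
    · intro g hg; rcases List.mem_append.mp hg with h | h
      exacts [hsw1 g h, hsw2 g h]


/-- precomposition operator -/
noncomputable def P (σ : Perm α) : (α → ℝ) →ₗ[ℝ] (α → ℝ) := LinearMap.funLeft ℝ ℝ σ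

noncomputable def M (σ : Perm α) : (α → ℝ) →ₗ[ℝ] (α → ℝ) := P σ - LinearMap.id

lemma M_apply (σ : Perm α) (f : α → ℝ) (x : α) : M σ f x = f (σ x) - f x := rfl

lemma M_one : M (1 : Perm α) = 0 := by
  ext f x; simp [M_apply]

lemma M_mul (σ τ : Perm α) : M (σ * τ) = (P τ).comp (M σ) + M τ := by
  ext f x
  simp [M_apply, P, LinearMap.funLeft, Perm.mul_apply]

lemma rank_M_swap_le (a b : α) : finrank ℝ (LinearMap.range (M (Equiv.swap a b))) ≤ 1 := by
  classical
  set χ : α → ℝ := fun x => if x = a then 1 else if x = b then -1 else 0 with hχ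
  have hle : LinearMap.range (M (Equiv.swap a b)) ≤ Submodule.span ℝ {χ} := by
    rintro g ⟨f, rfl⟩
    have : M (Equiv.swap a b) f = (f b - f a) • χ := by
      funext x
      rcases eq_or_ne x a with rfl | hxa
      · by_cases hab : x = b
        · subst hab; simp [M_apply, hχ]
        · simp [M_apply, Equiv.swap_apply_left, hχ, hab]
      · rcases eq_or_ne x b with rfl | hxb
        · simp [M_apply, Equiv.swap_apply_right, hχ, Ne.symm hxa, hxa]
        · simp [M_apply, Equiv.swap_apply_of_ne_of_ne hxa hxb, hχ, hxa, hxb]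
    rw [this]
    exact Submodule.smul_mem _ _ (Submodule.mem_span_singleton_self χ)
  calc finrank ℝ (LinearMap.range (M (Equiv.swap a b)))
      ≤ finrank ℝ (Submodule.span ℝ {χ}) := Submodule.finrank_mono hle
    _ ≤ 1 := by
        refine le_trans (finrank_span_le_card ({χ} : Set (α → ℝ))) ?_
        simp

lemma rank_M_prod_le : ∀ l : List (Perm α), (∀ τ ∈ l, τ.IsSwap) →
    finrank ℝ (LinearMap.range (M l.prod)) ≤ l.length
  | [], _ => by rw [List.prod_nil, M_one]; simp
  | (τ :: l), h => by
    have ih := rank_M_prod_le l (fun g hg => h g (List.mem_cons_of_mem _ hg))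
    obtain ⟨a, b, -, hab⟩ := h τ (List.mem_cons_self (a := τ) (l := l))
    rw [List.prod_cons, M_mul]
    have hsub : LinearMap.range ((P l.prod).comp (M τ) + M l.prod)
        ≤ LinearMap.range ((P l.prod).comp (M τ)) ⊔ LinearMap.range (M l.prod) := by
      rintro g ⟨f, rfl⟩
      exact Submodule.mem_sup.2 ⟨_, ⟨f, rfl⟩, _, ⟨f, rfl⟩, rfl⟩
    have h1 : finrank ℝ (LinearMap.range ((P l.prod).comp (M τ))) ≤ 1 := by
      rw [LinearMap.range_comp]
      refine le_trans (Submodule.finrank_map_le _ _) ?_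
      rw [hab]; exact rank_M_swap_le a b
    calc finrank ℝ (LinearMap.range ((P l.prod).comp (M τ) + M l.prod))
        ≤ finrank ℝ ↥(LinearMap.range ((P l.prod).comp (M τ)) ⊔ LinearMap.range (M l.prod)) :=
          Submodule.finrank_mono hsub
      _ ≤ finrank ℝ (LinearMap.range ((P l.prod).comp (M τ)))
            + finrank ℝ (LinearMap.range (M l.prod)) :=
          Submodule.finrank_add_le_finrank_add_finrank _ _
      _ ≤ 1 + l.length := add_le_add h1 ih
      _ = (τ :: l).length := by simp [add_comm]


lemma fixed_zpow {σ : Perm α} {f : α → ℝ} (hf : ∀ x, f (σ x) = f x) :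
    ∀ (k : ℤ) (x : α), f ((σ ^ k) x) = f x := by
  have hinv : ∀ x, f (σ⁻¹ x) = f x := by
    intro x
    conv_rhs => rw [← (show σ (σ⁻¹ x) = x from σ.apply_symm_apply x)]
    rw [hf]
  have key : ∀ (τ : Perm α), (∀ x, f (τ x) = f x) → ∀ (m : ℕ) (x : α), f ((τ ^ m) x) = f x := by
    intro τ hτ m
    induction m with
    | zero => simp
    | succ k ih => intro x; rw [pow_succ, Perm.mul_apply, ih, hτ]
  intro k x
  cases k with
  | ofNat m => simpa using key σ hf m x
  | negSucc m =>
    rw [zpow_negSucc, ← inv_pow]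
    exact key σ⁻¹ hinv (m + 1) x

/-- the chosen representative of the cycle of `x` -/
noncomputable def rep (σ : Perm α) (x : α) : α :=
  if h : σ x = x then x
  else (σ.cycleOf x).support.min' ⟨x, by
    rw [mem_support_cycleOf_iff]
    exact ⟨Equiv.Perm.SameCycle.refl σ x, mem_support.2 h⟩⟩

lemma sameCycle_rep (σ : Perm α) (x : α) : σ.SameCycle x (rep σ x) := by
  unfold rep
  split_ifs with h
  · exact Equiv.Perm.SameCycle.refl σ x
  · have hmem := Finset.min'_mem (σ.cycleOf x).support ⟨x, by
      rw [mem_support_cycleOf_iff]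
      exact ⟨Equiv.Perm.SameCycle.refl σ x, mem_support.2 h⟩⟩
    exact ((mem_support_cycleOf_iff).1 hmem).1

lemma rep_eq_min' {σ : Perm α} {x : α} (h : σ x ≠ x) (hne : (σ.cycleOf x).support.Nonempty) :
    rep σ x = (σ.cycleOf x).support.min' hne := by
  unfold rep
  rw [dif_neg h]

lemma min'_congr {s t : Finset α} (h : s = t) (hs : s.Nonempty) :
    s.min' hs = t.min' (h ▸ hs) := by subst h; rfl

lemma card_image_rep_le (σ : Perm α) :
    (Finset.univ.image (rep σ)).card
      ≤ σ.cycleFactorsFinset.card + (Finset.univ.filter fun x => σ x = x).card := by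
  classical
  set S := Finset.univ.image (rep σ) with hS
  have hsplit := Finset.card_filter_add_card_filter_not
    (s := S) (p := fun y => σ y = y)
  have h1 : (S.filter fun y => σ y = y).card
      ≤ (Finset.univ.filter fun x => σ x = x).card := by
    apply Finset.card_le_card
    intro y hy
    simp only [Finset.mem_filter] at hy ⊢
    exact ⟨Finset.mem_univ y, hy.2⟩
  -- each moved element of S is the min' of its own cycle's support
  have hkey : ∀ y ∈ S.filter (fun y => ¬ σ y = y), ∀ hne : (σ.cycleOf y).support.Nonempty,
      y = (σ.cycleOf y).support.min' hne := by
    intro y hy hne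
    simp only [Finset.mem_filter, hS, Finset.mem_image] at hy
    obtain ⟨⟨x, -, hxy⟩, hymoved⟩ := hy
    have hx : σ x ≠ x := by
      intro hfix
      apply hymoved
      rw [← hxy]
      unfold rep
      rw [dif_pos hfix, hfix]
    have hnex : (σ.cycleOf x).support.Nonempty := ⟨x, by
      rw [mem_support_cycleOf_iff]
      exact ⟨Equiv.Perm.SameCycle.refl σ x, mem_support.2 hx⟩⟩
    have hxy' : y = (σ.cycleOf x).support.min' hnex := by
      rw [← hxy, rep_eq_min' hx hnex]
    have hsc : σ.SameCycle x y := by rw [← hxy]; exact sameCycle_rep σ x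
    have hco : σ.cycleOf x = σ.cycleOf y := hsc.cycleOf_eq
    subst hxy'
    exact min'_congr (congrArg Perm.support hco) hnex
  have h2 : (S.filter fun y => ¬ σ y = y).card ≤ σ.cycleFactorsFinset.card := by
    apply Finset.card_le_card_of_injOn (fun y => σ.cycleOf y)
    · intro y hy
      have hymoved : σ y ≠ y := (Finset.mem_filter.1 hy).2
      exact (cycleOf_mem_cycleFactorsFinset_iff).2 (mem_support.2 hymoved)
    · intro y1 h1' y2 h2' heq
      have hm1 : σ y1 ≠ y1 := (Finset.mem_filter.1 h1').2
      have hm2 : σ y2 ≠ y2 := (Finset.mem_filter.1 h2').2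
      have hne1 : (σ.cycleOf y1).support.Nonempty := ⟨y1, by
        rw [mem_support_cycleOf_iff]
        exact ⟨Equiv.Perm.SameCycle.refl σ y1, mem_support.2 hm1⟩⟩
      have hne2 : (σ.cycleOf y2).support.Nonempty := ⟨y2, by
        rw [mem_support_cycleOf_iff]
        exact ⟨Equiv.Perm.SameCycle.refl σ y2, mem_support.2 hm2⟩⟩
      rw [hkey y1 h1' hne1, hkey y2 h2' hne2]
      exact min'_congr (congrArg Perm.support (by simpa using heq)) hne1
  omega

lemma finrank_ker_le (σ : Perm α) :
    finrank ℝ (LinearMap.ker (M σ))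
      ≤ σ.cycleFactorsFinset.card + (Finset.univ.filter fun x => σ x = x).card := by
  classical
  set S := Finset.univ.image (rep σ) with hS
  -- evaluation map on representatives
  let Φ : ↥(LinearMap.ker (M σ)) →ₗ[ℝ] (↥S → ℝ) :=
    (LinearMap.funLeft ℝ ℝ (Subtype.val : ↥S → α)).comp (LinearMap.ker (M σ)).subtype
  have hinj : Function.Injective Φ := by
    rw [injective_iff_map_eq_zero]
    intro f hf
    ext x
    have hker : M σ f.1 = 0 := f.2
    have hfix : ∀ y, f.1 (σ y) = f.1 y := by
      intro y
      have := congrFun (congrArg (fun g => (g : α → ℝ)) hker) y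
      simp only [M_apply] at this
      have h' : f.1 (σ y) - f.1 y = 0 := this
      linarith
    have hrep : f.1 x = f.1 (rep σ x) := by
      obtain ⟨k, hk⟩ := sameCycle_rep σ x
      rw [← hk]
      exact (fixed_zpow hfix k x).symm
    have hrepS : rep σ x ∈ S := Finset.mem_image_of_mem _ (Finset.mem_univ x)
    have := congrFun hf ⟨rep σ x, hrepS⟩
    simp only [Φ, LinearMap.comp_apply, LinearMap.funLeft_apply, Pi.zero_apply] at this
    show f.1 x = 0
    rw [hrep]
    exact this
  have hle : finrank ℝ (LinearMap.ker (M σ)) ≤ finrank ℝ (↥S → ℝ) :=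
    LinearMap.finrank_le_finrank_of_injective hinj
  rw [finrank_pi ℝ, Fintype.card_coe] at hle
  simpa using hle.trans (by simpa using card_image_rep_le σ)


lemma F_swap {a b : α} (h : a ≠ b) : F (Equiv.swap a b) = 1 := by
  rw [F_isCycle (isCycle_swap h), card_support_swap h]

/-- Multiplying by a transposition with one endpoint fixed adds exactly one to `F`. -/
lemma F_fixed_swap_mul {τ : Perm α} {a b : α} (ha : τ a = a) (hab : a ≠ b) :
    F (Equiv.swap a b * τ) = F τ + 1 := by
  by_cases hb : τ b = b
  · -- disjoint case
    have hd : Perm.Disjoint (Equiv.swap a b) τ := by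
      intro x
      by_cases hx : x = a ∨ x = b
      · rcases hx with rfl | rfl
        exacts [Or.inr ha, Or.inr hb]
      · push_neg at hx
        exact Or.inl (Equiv.swap_apply_of_ne_of_ne hx.1 hx.2)
    rw [F_disjoint_mul hd, F_swap hab, add_comm]
  · -- b is moved by τ; the cycle of b absorbs a
    set c := τ.cycleOf b with hc
    have hcmem : c ∈ τ.cycleFactorsFinset :=
      (cycleOf_mem_cycleFactorsFinset_iff).2 (mem_support.2 hb)
    have hccyc : c.IsCycle := (mem_cycleFactorsFinset_iff.1 hcmem).1
    have hcagree : ∀ x ∈ c.support, c x = τ x := (mem_cycleFactorsFinset_iff.1 hcmem).2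
    have hcsupport_le : c.support ⊆ τ.support := support_cycleOf_le τ b
    set rest := τ * c⁻¹ with hrest
    have hdisj : Perm.Disjoint rest c := disjoint_mul_inv_of_mem_cycleFactorsFinset hcmem
    have hτ : rest * c = τ := by rw [hrest]; group
    have ha_not_c : a ∉ c.support := fun h =>
      (mem_support.1 (hcsupport_le h)) ha
    have hca : c a = a := notMem_support.1 ha_not_c
    have hresta : rest a = a := by
      rw [hrest, Perm.mul_apply]
      have : c⁻¹ a = a := by rw [Perm.inv_eq_iff_eq]; exact hca.symm
      rw [this, ha]
    have hrestb : rest b = b := by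
      rw [hrest, Perm.mul_apply]
      have hbsup : b ∈ c.support := by
        rw [hc]
        exact mem_support_cycleOf_iff.2 ⟨Equiv.Perm.SameCycle.refl τ b, mem_support.2 hb⟩
      have hbc : c⁻¹ b ∈ c.support := by
        rw [← Perm.support_inv]
        exact apply_mem_support.2 (by rw [Perm.support_inv]; exact hbsup)
      rw [← hcagree _ hbc]
      simp
    -- list representation of c
    have hbmoved : c b ≠ b := by
      rw [hc, cycleOf_apply_self]; exact hb
    set l := c.toList b with hl
    have hnd : l.Nodup := nodup_toList c b
    have hform : l.formPerm = c := by
      rw [hl, formPerm_toList, hccyc.cycleOf_eq hbmoved]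
    have hlen : l.length = c.support.card := by
      rw [hl, Equiv.Perm.length_toList, hccyc.cycleOf_eq hbmoved]
    have h2 : 2 ≤ l.length := by rw [hlen]; exact hccyc.two_le_card_support
    have h0 : l.get ⟨0, by omega⟩ = b := toList_getElem_zero c b (mem_support.2 hbmoved)
    obtain ⟨y, t, hyt⟩ := List.exists_cons_of_ne_nil (by
      intro hnil; rw [hnil] at h2; simp at h2 : l ≠ [])
    have hyb : y = b := by
      have h1 := (List.get_of_eq hyt ⟨0, by omega⟩).symm.trans h0
      simpa using h1
    have hlt : l = b :: t := by rw [hyt, hyb]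
    have hanotl : a ∉ l := by
      intro hmem
      rw [hl, mem_toList_iff] at hmem
      obtain ⟨hsc, -⟩ := hmem
      obtain ⟨k, hk⟩ := hsc
      have hfixk : (c ^ (-k)) a = a := zpow_apply_eq_self_of_apply_eq_self hca (-k)
      have hb' : (c ^ (-k)) a = b := by
        rw [← hk, ← Perm.mul_apply, ← zpow_add, neg_add_cancel]
        simp
      rw [hfixk] at hb'
      exact hab hb'
    -- the extended cycle g = swap a b * c
    have hndal : (a :: l).Nodup := List.nodup_cons.2 ⟨hanotl, hnd⟩
    set g := Equiv.swap a b * c with hgdef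
    have hg : (a :: l).formPerm = g := by
      rw [hlt, List.formPerm_cons_cons, ← hlt, hform]
    have hgcyc : g.IsCycle := by
      rw [← hg]
      exact List.isCycle_formPerm hndal (by rw [List.length_cons]; exact le_trans h2 (Nat.le_succ _))
    have hlsupp : l.toFinset = c.support := by
      rw [← hform, List.support_formPerm_of_nodup l hnd
        (fun x hx => by rw [hx] at h2; simp at h2)]
    have hgsupp : g.support = (a :: l).toFinset := by
      rw [← hg]
      exact List.support_formPerm_of_nodup _ hndal
        (fun x hx => by
          have hxlen := congrArg List.length hx
          rw [List.length_cons, List.length_singleton] at hxlen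
          omega)
    have hgcard : g.support.card = c.support.card + 1 := by
      rw [hgsupp]
      have hins : (a :: l).toFinset = insert a l.toFinset := by simp
      rw [hins, Finset.card_insert_of_notMem
        (fun hmem => hanotl (List.mem_toFinset.1 hmem)), hlsupp]
    have hdisj2 : Perm.Disjoint g rest := by
      intro x
      by_cases hgx : g x = x
      · exact Or.inl hgx
      · have hxs : x ∈ g.support := mem_support.2 hgx
        rw [hgsupp, List.mem_toFinset, List.mem_cons] at hxs
        rcases hxs with rfl | hxl
        · exact Or.inr hresta
        · have hxc : x ∈ c.support := by rw [← hlsupp, List.mem_toFinset]; exact hxl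
          rcases hdisj x with hr | hcx
          · exact Or.inr hr
          · exact absurd hcx (mem_support.1 hxc)
    have hdswap : Perm.Disjoint (Equiv.swap a b) rest := by
      intro x
      by_cases hx : x = a ∨ x = b
      · rcases hx with rfl | rfl
        exacts [Or.inr hresta, Or.inr hrestb]
      · push_neg at hx
        exact Or.inl (Equiv.swap_apply_of_ne_of_ne hx.1 hx.2)
    have hmuleq : Equiv.swap a b * τ = rest * g := by
      calc Equiv.swap a b * τ = Equiv.swap a b * (rest * c) := by rw [hτ]
        _ = (Equiv.swap a b * rest) * c := (mul_assoc _ _ _).symm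
        _ = (rest * Equiv.swap a b) * c := by rw [hdswap.commute.eq]
        _ = rest * (Equiv.swap a b * c) := mul_assoc _ _ _
        _ = rest * g := rfl
    have h2c : 2 ≤ c.support.card := hccyc.two_le_card_support
    rw [hmuleq, F_disjoint_mul hdisj2.symm, ← hτ, F_disjoint_mul hdisj,
      F_isCycle hgcyc, F_isCycle hccyc, hgcard]
    omega

/-- `Fin n` is equivalent to the nonzero elements of `Fin (n+1)`. -/
def succEquiv (n : ℕ) : Fin n ≃ {i : Fin (n + 1) // i ≠ 0} where
  toFun x := ⟨x.succ, Fin.succ_ne_zero x⟩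
  invFun y := y.1.pred y.2
  left_inv x := by simp
  right_inv y := by simp

lemma decomposeFin_zero {n : ℕ} (e : Perm (Fin n)) :
    Equiv.Perm.decomposeFin.symm (0, e) = e.extendDomain (succEquiv n) := by
  ext x
  refine Fin.cases ?_ (fun y => ?_) x
  · rw [Equiv.Perm.decomposeFin_symm_apply_zero]
    rw [Perm.extendDomain_apply_not_subtype]
    simp
  · rw [Equiv.Perm.decomposeFin_symm_apply_succ]
    rw [Equiv.swap_self]
    have : (y.succ : Fin (n + 1)) = ((succEquiv n y : {i : Fin (n+1) // i ≠ 0}) : Fin (n+1)) := rfl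
    rw [this, Perm.extendDomain_apply_image]
    simp [succEquiv]

lemma F_decomposeFin_zero {n : ℕ} (e : Perm (Fin n)) :
    F (Equiv.Perm.decomposeFin.symm (0, e)) = F e := by
  rw [decomposeFin_zero]
  unfold F
  rw [cycleType_extendDomain]

lemma decomposeFin_eq_swap_mul {n : ℕ} (p : Fin (n + 1)) (e : Perm (Fin n)) :
    Equiv.Perm.decomposeFin.symm (p, e)
      = Equiv.swap 0 p * Equiv.Perm.decomposeFin.symm (0, e) := by
  ext x
  refine Fin.cases ?_ (fun y => ?_) x
  · simp
  · simp [Equiv.swap_self]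


lemma F_le_length {n : ℕ} (l : List (Perm (Fin n))) (hsw : ∀ τ ∈ l, τ.IsSwap) :
    F l.prod ≤ l.length := by
  have h1 := rank_M_prod_le l hsw
  have h2 := LinearMap.finrank_range_add_finrank_ker (M l.prod)
  have h3 : finrank ℝ (Fin n → ℝ) = n := by rw [finrank_pi]; simp
  have h4 := finrank_ker_le l.prod
  have h5 := F_add_C l.prod
  rw [h3] at h2
  unfold C at h5
  rw [Fintype.card_fin] at h5
  omega

lemma minSwaps_eq_F {n : ℕ} (σ : Perm (Fin n)) : minSwaps n σ = F σ := by
  obtain ⟨l, hlen, hsw, hp⟩ := exists_swap_list σ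
  have hmem : F σ ∈ {t : ℕ | ∃ l : List (Perm (Fin n)),
      l.length = t ∧ (∀ τ ∈ l, τ.IsSwap) ∧ l.prod = σ} := ⟨l, hlen, hsw, hp⟩
  have h1 : minSwaps n σ ≤ F σ := Nat.sInf_le hmem
  have h2 : F σ ≤ minSwaps n σ := by
    obtain ⟨l', hlen', hsw', hp'⟩ := Nat.sInf_mem (Set.nonempty_of_mem hmem)
    rw [show minSwaps n σ = l'.length from hlen'.symm, ← hp']
    exact F_le_length l' hsw'
  omega

lemma F_decomposeFin {n : ℕ} (p : Fin (n + 1)) (e : Perm (Fin n)) :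
    F (Equiv.Perm.decomposeFin.symm (p, e)) = F e + if p = 0 then 0 else 1 := by
  rcases eq_or_ne p 0 with rfl | hp
  · rw [F_decomposeFin_zero, if_pos rfl, add_zero]
  · rw [decomposeFin_eq_swap_mul,
      F_fixed_swap_mul (Equiv.Perm.decomposeFin_symm_apply_zero 0 e) hp.symm,
      F_decomposeFin_zero, if_neg hp]

lemma sum_F (n : ℕ) :
    ∑ σ : Perm (Fin n), (F σ : ℝ)
      = (Nat.factorial n : ℝ) *
          ((n : ℝ) - ∑ i ∈ Finset.range n, (1 : ℝ) / (i + 1)) := by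
  induction n with
  | zero =>
    rw [Finset.sum_eq_zero (fun σ _ => by
      rw [Subsingleton.elim σ 1]
      simp [F])]
    simp
  | succ n ih =>
    rw [Finset.univ_perm_fin_succ, Finset.sum_map]
    have hexp : ∀ x : Fin (n + 1) × Perm (Fin n),
        (F (Equiv.Perm.decomposeFin.symm.toEmbedding x) : ℝ)
          = (F x.2 : ℝ) + if x.1 = 0 then 0 else 1 := by
      rintro ⟨p, e⟩
      rw [Equiv.coe_toEmbedding, F_decomposeFin]
      push_cast
      split_ifs <;> simp
    rw [Finset.sum_congr rfl (fun x _ => hexp x), Fintype.sum_prod_type]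
    have hite : (∑ p : Fin (n + 1), if p = 0 then (0:ℝ) else 1) = (n : ℝ) := by
      have h1 : (∑ p : Fin (n + 1), if p = 0 then (0:ℝ) else 1)
          = ∑ p : Fin (n + 1), ((1 : ℝ) - if p = 0 then 1 else 0) := by
        apply Finset.sum_congr rfl
        intro p _
        split_ifs <;> ring
      rw [h1, Finset.sum_sub_distrib, Finset.sum_ite_eq' Finset.univ (0 : Fin (n + 1))
        (fun _ => (1:ℝ))]
      simp
    have hstep : ∀ p : Fin (n + 1),
        (∑ e : Perm (Fin n), ((F e : ℝ) + if p = 0 then 0 else 1))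
          = (Nat.factorial n : ℝ) * ((n : ℝ) - ∑ i ∈ Finset.range n, (1 : ℝ) / (i + 1))
            + (Nat.factorial n : ℝ) * (if p = 0 then 0 else 1) := by
      intro p
      rw [Finset.sum_add_distrib, ih, Finset.sum_const, Finset.card_univ,
        Fintype.card_perm, Fintype.card_fin, nsmul_eq_mul]
    rw [Finset.sum_congr rfl (fun p _ => hstep p), Finset.sum_add_distrib,
      Finset.sum_const, Finset.card_univ, Fintype.card_fin, ← Finset.mul_sum, hite,
      nsmul_eq_mul, Finset.sum_range_succ, Nat.factorial_succ]
    push_cast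
    field_simp
    ring

end Stmt6Aux

/-- The sum over all permutations `σ ∈ S_n` of the minimal number `m(σ)` of
transpositions in a decomposition of `σ` equals `n!·(n − H_n)` where
`H_n = ∑_{i=1}^n 1/i`; equivalently, the expected minimal number of transpositions of a
uniformly random permutation of `{1,…,n}` is `n − H_n`. -/
theorem stmt6 (n : ℕ) :
    ∑ σ : Equiv.Perm (Fin n), (minSwaps n σ : ℝ)
      = (Nat.factorial n : ℝ) *
          ((n : ℝ) - ∑ i ∈ Finset.range n, (1 : ℝ) / (i + 1)) := by
  rw [Finset.sum_congr rfl (fun σ _ => by rw [Stmt6Aux.minSwaps_eq_F σ])]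
  exact Stmt6Aux.sum_F n
end
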